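/- arXiv:math/0503282 — 5 statements merged into one kernel-verified Lean document; each statement's English description precedes it below -/
import Mathlib

section
/- Let n = d·m and m = d·e for positive integers d, e, m, with d odd. For an integer k, let G = ℤ/d act on ℤ/n with a generator σ acting by multiplication by (1+km), and let N_k = ∑_{i=0}^{d-1} σ^i and T_k = 1 - σ. Then the Tate-style quotient ker(N_k)/im(T_k) ≅ ℤ/gcd(d,k). -/
open AddSubgroup

lemma range_mulLeft_zmod (n : ℕ) (a : ZMod n) :
    (AddMonoidHom.mulLeft a).range = zmultiples a := by
  ext y
  constructor
  · rintro ⟨x, rfl⟩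
    obtain ⟨c, rfl⟩ := ZMod.intCast_surjective x
    exact ⟨c, by simp [zsmul_eq_mul, mul_comm]⟩
  · rintro ⟨c, rfl⟩
    exact ⟨(c : ZMod n), by simp [zsmul_eq_mul, mul_comm]⟩

/-- For n = d·m, m = d·e with d odd and the k-twisted action of G = ℤ/d on ℤ/n (generator acting by
multiplication by 1+km, so N_k is multiplication by d and T_k is multiplication by -km), the Tate
quotient ker(N_k)/im(T_k) is cyclic of order gcd(d,k). -/
theorem stmt_6 (n d e m : ℕ) (hd : 0 < d) (he : 0 < e) (hm : 0 < m)
    (hnm : n = d * m) (hme : m = d * e) (hodd : Odd d) (k : ℤ)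
    (N T : ZMod n →+ ZMod n)
    (hN : N = AddMonoidHom.mulLeft ((d : ZMod n)))
    (hT : T = AddMonoidHom.mulLeft (-(k : ZMod n) * (m : ZMod n))) :
    Nonempty ((N.ker ⧸ T.range.addSubgroupOf N.ker) ≃+ ZMod (Int.gcd d k)) := by
  set g : ℕ := Int.gcd d k with hg
  have hn0 : n ≠ 0 := by rw [hnm]; positivity
  have hgd : g ∣ d := Int.ofNat_dvd.mp (Int.gcd_dvd_left (d : ℤ) k)
  have hg0 : 0 < g := Nat.pos_of_ne_zero (fun h => by
    exact absurd (h ▸ hgd) (by simpa using hd.ne'))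
  have hgk : (g : ℤ) ∣ k := Int.gcd_dvd_right (d : ℤ) k
  have hdn : d ∣ n := Dvd.intro m hnm.symm
  have hgen : (-(k : ZMod n) * (m : ZMod n)) = ((-(k * m) : ℤ) : ZMod n) := by push_cast; ring
  -- T.range = zmultiples (g*m)
  have hrange : T.range = zmultiples ((g * m : ℕ) : ZMod n) := by
    rw [hT, range_mulLeft_zmod, hgen]
    apply le_antisymm
    · rw [zmultiples_le, mem_zmultiples_iff]
      obtain ⟨k', hk'⟩ := hgk
      refine ⟨-k', ?_⟩
      rw [zsmul_eq_mul]
      push_cast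
      rw [hk']; push_cast; ring
    · rw [zmultiples_le, mem_zmultiples_iff]
      set A := Int.gcdA (d : ℤ) k
      set B := Int.gcdB (d : ℤ) k
      have hbez : (g : ℤ) = d * A + k * B := Int.gcd_eq_gcd_ab (d : ℤ) k
      refine ⟨-B, ?_⟩
      rw [zsmul_eq_mul]
      have h2 : ((g * m : ℕ) : ℤ) - (-B) * (-(k * m)) = (n : ℤ) * A := by
        push_cast; rw [hnm]; push_cast
        linear_combination (m : ℤ) * hbez
      have h3 : (((g * m : ℕ) : ℤ) : ZMod n) - (((-B) * (-(k * m)) : ℤ) : ZMod n) = 0 := by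
        rw [← Int.cast_sub, h2, ZMod.intCast_zmod_eq_zero_iff_dvd]
        exact Dvd.intro _ rfl
      have h4 := sub_eq_zero.mp h3
      have h5 : ((-B : ℤ) : ZMod n) * ((-(k * m) : ℤ) : ZMod n)
          = (((-B) * (-(k * m)) : ℤ) : ZMod n) := by push_cast; ring
      rw [h5, ← h4]; push_cast; ring
  -- T.range ≤ N.ker
  have hle : T.range ≤ N.ker := by
    rintro x ⟨y, rfl⟩
    rw [hN, hT]
    simp only [AddMonoidHom.mem_ker, AddMonoidHom.coe_mulLeft]
    have h0 : (d : ZMod n) * (m : ZMod n) = 0 := by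
      rw [← Nat.cast_mul, ← hnm, ZMod.natCast_self]
    calc (d : ZMod n) * (-(k : ZMod n) * (m : ZMod n) * y)
        = ((d : ZMod n) * (m : ZMod n)) * (-(k : ZMod n) * y) := by ring
      _ = 0 := by rw [h0]; ring
  -- card of T.range
  have hgmd : g * m ∣ n := by rw [hnm]; exact mul_dvd_mul_right hgd m
  have hcardT : Nat.card T.range = d / g := by
    rw [hrange, Nat.card_zmultiples, ZMod.addOrderOf_coe _ hn0,
      Nat.gcd_eq_right hgmd, hnm, Nat.mul_div_mul_right d g hm]
  -- card of N.ker
  have hcardrangeN : Nat.card N.range = m := by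
    rw [hN, range_mulLeft_zmod, Nat.card_zmultiples, ZMod.addOrderOf_coe _ hn0,
      Nat.gcd_eq_right hdn, hnm, Nat.mul_div_cancel_left m hd]
  have hcardK : Nat.card N.ker = d := by
    have hlag := AddSubgroup.card_eq_card_quotient_mul_card_addSubgroup N.ker
    rw [Nat.card_zmod, Nat.card_congr (QuotientAddGroup.quotientKerEquivRange N).toEquiv,
      hcardrangeN] at hlag
    have : m * Nat.card N.ker = m * d := by rw [← hlag, hnm]; ring
    exact Nat.eq_of_mul_eq_mul_left hm this
  -- card of the subgroupOf
  set S := T.range.addSubgroupOf N.ker with hS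
  have hcardS : Nat.card S = d / g := by
    rw [Nat.card_congr (AddSubgroup.addSubgroupOfEquivOfLe hle).toEquiv, hcardT]
  -- card of quotient
  have hdg0 : 0 < d / g := Nat.div_pos (Nat.le_of_dvd hd hgd) hg0
  have hQ : Nat.card (N.ker ⧸ S) = g := by
    have hlag := AddSubgroup.card_eq_card_quotient_mul_card_addSubgroup S
    rw [hcardK, hcardS] at hlag
    have hdgg : g * (d / g) = d := Nat.mul_div_cancel' hgd
    exact Nat.eq_of_mul_eq_mul_right hdg0 (by rw [← hlag, hdgg])
  haveI : IsAddCyclic (N.ker ⧸ S) :=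
    isAddCyclic_of_surjective (QuotientAddGroup.mk' S) (QuotientAddGroup.mk'_surjective S)
  exact ⟨addEquivOfAddCyclicCardEq (by rw [hQ, Nat.card_zmod])⟩
end

section
/- Let n = d·m and m = d·e for positive integers d, e, m, with d odd, and let k be an integer. Then ker(T_k)/im(N_k) ≅ ℤ/gcd(d,k), where T_k is multiplication by -km and N_k is multiplication by d on ℤ/n. -/
/-!
In `ZMod n` with `n = d * m`, the kernel of multiplication by `-k * m` consists of the classes
of `t` with `d ∣ k * t`, that is the multiples of `d / gcd d k`, while the image of
multiplication by `d` is generated by `d`. Both are subgroups of a cyclic group, so the quotient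
is cyclic, of order the relative index `d / (d / gcd d k) = gcd d k`.
-/

theorem Int.dvd_mul_iff_div_gcd_dvd {a b c : ℤ} (h : 0 < Int.gcd a b) :
    a ∣ b * c ↔ a / Int.gcd a b ∣ c := by
  set g : ℤ := (Int.gcd a b : ℤ)
  have hcop : IsCoprime (a / g) (b / g) :=
    Int.isCoprime_iff_gcd_eq_one.mpr (Int.gcd_div_gcd_div_gcd h)
  calc a ∣ b * c ↔ a / g * g ∣ b / g * c * g := by
        rw [Int.ediv_mul_cancel (Int.gcd_dvd_left a b), mul_right_comm,
          Int.ediv_mul_cancel (Int.gcd_dvd_right a b)]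
    _ ↔ a / g ∣ b / g * c := mul_dvd_mul_iff_right (by positivity)
    _ ↔ a / g ∣ c := ⟨hcop.dvd_of_dvd_mul_left, fun h => h.mul_left _⟩

namespace ZMod

theorem range_mulLeft {n : ℕ} (a : ZMod n) :
    (AddMonoidHom.mulLeft a).range = AddSubgroup.zmultiples a := by
  ext x
  obtain ⟨t, rfl⟩ := ZMod.intCast_surjective x
  simp only [AddMonoidHom.mem_range, AddMonoidHom.coe_mulLeft, AddSubgroup.mem_zmultiples_iff,
    zsmul_eq_mul]
  constructor
  · rintro ⟨y, hy⟩
    obtain ⟨s, rfl⟩ := ZMod.intCast_surjective y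
    exact ⟨s, by rw [← hy, mul_comm]⟩
  · rintro ⟨s, hs⟩
    exact ⟨s, by rw [← hs, mul_comm]⟩

theorem intCast_mem_zmultiples_natCast_iff {n a : ℕ} (h : a ∣ n) (t : ℤ) :
    (t : ZMod n) ∈ AddSubgroup.zmultiples (a : ZMod n) ↔ (a : ℤ) ∣ t := by
  simp only [AddSubgroup.mem_zmultiples_iff, zsmul_eq_mul]
  constructor
  · rintro ⟨s, hs⟩
    have hn : (n : ℤ) ∣ t - s * a := by
      rw [← ZMod.intCast_eq_intCast_iff_dvd_sub]; push_cast; exact hs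
    simpa using (Int.natCast_dvd_natCast.mpr h).trans hn |>.add (dvd_mul_left (a : ℤ) s)
  · rintro ⟨s, rfl⟩
    exact ⟨s, by push_cast; ring⟩

theorem ker_mulLeft_intCast {n : ℕ} (hn : n ≠ 0) (c : ℤ) :
    (AddMonoidHom.mulLeft (c : ZMod n)).ker =
      AddSubgroup.zmultiples ((n / Int.gcd n c : ℕ) : ZMod n) := by
  have hgcd : 0 < Int.gcd n c := Int.gcd_pos_of_ne_zero_left c (by exact_mod_cast hn)
  have hdvd : Int.gcd n c ∣ n := Int.gcd_dvd_natAbs_left n c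
  ext x
  obtain ⟨t, rfl⟩ := ZMod.intCast_surjective x
  rw [intCast_mem_zmultiples_natCast_iff (Nat.div_dvd_of_dvd hdvd),
    AddMonoidHom.mem_ker, AddMonoidHom.coe_mulLeft, ← Int.cast_mul,
    ZMod.intCast_zmod_eq_zero_iff_dvd, Int.dvd_mul_iff_div_gcd_dvd hgcd, Int.natCast_div]

theorem index_zmultiples_natCast {n a : ℕ} (hn : n ≠ 0) (h : a ∣ n) :
    (AddSubgroup.zmultiples (a : ZMod n)).index = a := by
  have hcard := (AddSubgroup.zmultiples (a : ZMod n)).card_mul_index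
  rw [Nat.card_zmultiples, ZMod.addOrderOf_coe a hn, Nat.gcd_eq_right h, Nat.card_zmod] at hcard
  have hpos : 0 < n / a := Nat.div_pos (Nat.le_of_dvd (Nat.pos_of_ne_zero hn) h)
    (Nat.pos_of_dvd_of_pos h (Nat.pos_of_ne_zero hn))
  exact Nat.eq_of_mul_eq_mul_left hpos (hcard.trans (Nat.div_mul_cancel h).symm)

theorem relIndex_zmultiples_natCast {n a b : ℕ} (hn : n ≠ 0) (hab : a ∣ b) (hb : b ∣ n) :
    (AddSubgroup.zmultiples (b : ZMod n)).relIndex (AddSubgroup.zmultiples (a : ZMod n)) =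
      b / a := by
  have hle : AddSubgroup.zmultiples (b : ZMod n) ≤ AddSubgroup.zmultiples (a : ZMod n) := by
    obtain ⟨c, rfl⟩ := hab
    exact AddSubgroup.zmultiples_le.mpr ⟨c, by simp [mul_comm]⟩
  have ha : a ≠ 0 := ne_zero_of_dvd_ne_zero hn (hab.trans hb)
  have hmul := AddSubgroup.relIndex_mul_index hle
  rw [index_zmultiples_natCast hn (hab.trans hb), index_zmultiples_natCast hn hb] at hmul
  exact Nat.eq_div_of_mul_eq_left ha hmul

end ZMod

theorem IsAddCyclic.nonempty_quotient_addEquiv_zmod_relIndex {G : Type*} [AddCommGroup G]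
    [IsAddCyclic G] {H K : AddSubgroup G} :
    Nonempty (K ⧸ H.addSubgroupOf K ≃+ ZMod (H.relIndex K)) := by
  have hcyc : IsAddCyclic (K ⧸ H.addSubgroupOf K) :=
    isAddCyclic_of_surjective _ (QuotientAddGroup.mk'_surjective _)
  rw [AddSubgroup.relIndex, AddSubgroup.index_eq_card]
  exact ⟨(zmodAddCyclicAddEquiv hcyc).symm⟩

theorem stmt_7_general (n d m : ℕ) (hd : 0 < d) (hm : 0 < m)
    (hnm : n = d * m) (k : ℤ)
    (N T : ZMod n →+ ZMod n)
    (hN : N = AddMonoidHom.mulLeft ((d : ZMod n)))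
    (hT : T = AddMonoidHom.mulLeft (-(k : ZMod n) * (m : ZMod n))) :
    Nonempty ((T.ker ⧸ N.range.addSubgroupOf T.ker) ≃+ ZMod (Int.gcd d k)) := by
  subst hN hT
  have hn : n ≠ 0 := by rw [hnm]; positivity
  have hgd : Int.gcd d k ∣ d := Int.gcd_dvd_natAbs_left d k
  have hker : (AddMonoidHom.mulLeft (-(k : ZMod n) * (m : ZMod n))).ker =
      AddSubgroup.zmultiples ((d / Int.gcd d k : ℕ) : ZMod n) := by
    rw [show -(k : ZMod n) * m = ((-k * m : ℤ) : ZMod n) by push_cast; rfl,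
      ZMod.ker_mulLeft_intCast hn, hnm, Nat.cast_mul, neg_mul, Int.gcd_neg, Int.gcd_mul_right,
      Int.natAbs_natCast, Nat.mul_div_mul_right _ _ hm]
  have hidx : (AddSubgroup.zmultiples (d : ZMod n)).relIndex
      (AddSubgroup.zmultiples ((d / Int.gcd d k : ℕ) : ZMod n)) = Int.gcd d k := by
    rw [ZMod.relIndex_zmultiples_natCast hn (Nat.div_dvd_of_dvd hgd) (hnm ▸ dvd_mul_right d m),
      Nat.div_div_self hgd hd.ne']
  obtain ⟨φ⟩ := IsAddCyclic.nonempty_quotient_addEquiv_zmod_relIndex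
    (H := AddSubgroup.zmultiples (d : ZMod n))
    (K := AddSubgroup.zmultiples ((d / Int.gcd d k : ℕ) : ZMod n))
  rw [ZMod.range_mulLeft, hker]
  exact ⟨φ.trans (ZMod.ringEquivCongr hidx).toAddEquiv⟩

/-- Let n = d·m and m = d·e for positive integers d, e, m, with d odd, and let k be an integer.
Then ker(T_k)/im(N_k) ≅ ℤ/gcd(d,k), where T_k is multiplication by -km and N_k is multiplication
by d on ℤ/n. -/
theorem stmt_7 (n d e m : ℕ) (hd : 0 < d) (he : 0 < e) (hm : 0 < m)
    (hnm : n = d * m) (hme : m = d * e) (hodd : Odd d) (k : ℤ)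
    (N T : ZMod n →+ ZMod n)
    (hN : N = AddMonoidHom.mulLeft ((d : ZMod n)))
    (hT : T = AddMonoidHom.mulLeft (-(k : ZMod n) * (m : ZMod n))) :
    Nonempty ((T.ker ⧸ N.range.addSubgroupOf T.ker) ≃+ ZMod (Int.gcd d k)) :=
  stmt_7_general n d m hd hm hnm k N T hN hT
end

section
/- Let G be a finite cyclic group of order d acting on M = ℤ/nℤ, where n = d·m, m = d·e, and a fixed generator acts by multiplication by (1+2m) (the twist k = 2). Then the group of invariants M^G is cyclic of order m·gcd(d,2). -/
/-- Let G be a finite cyclic group of order d acting on M = ℤ/nℤ, where n = d·m, m = d·e, and a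
fixed generator acts by multiplication by (1+2m) (the twist k = 2). Then the group of invariants
M^G (the fixed points of multiplication by 1+2m) is cyclic of order m·gcd(d,2). -/
theorem stmt_8 (n d e m : ℕ) (hd : 0 < d) (he : 0 < e) (hm : 0 < m)
    (hnm : n = d * m) (hme : m = d * e)
    (K : AddSubgroup (ZMod n))
    (hK : K = (AddMonoidHom.mulLeft ((1 : ZMod n) + 2 * m) - AddMonoidHom.id (ZMod n)).ker) :
    Nonempty (K ≃+ ZMod (m * Nat.gcd d 2)) := by
  have hn : 0 < n := hnm ▸ Nat.mul_pos hd hm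
  haveI : NeZero n := ⟨hn.ne'⟩
  set g : ℕ := m * Nat.gcd d 2 with hg
  have hgdvd : g ∣ n := by
    rw [hnm, hg, mul_comm d m]
    exact mul_dvd_mul_left m (Nat.gcd_dvd_left d 2)
  set c : ℕ := n / g with hc
  have hgpos : 0 < g := Nat.mul_pos hm (Nat.gcd_pos_of_pos_left 2 hd)
  have hcpos : 0 < c := Nat.div_pos (Nat.le_of_dvd hn hgdvd) hgpos
  have hgc : g * c = n := Nat.mul_div_cancel' hgdvd
  -- g = gcd (2*m) n
  have hgcd : g = Nat.gcd (2 * m) n := by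
    rw [hnm, hg, mul_comm (2 : ℕ) m, mul_comm d m, Nat.gcd_mul_left, Nat.gcd_comm 2 d]
  -- membership in K
  have hmemK : ∀ x : ZMod n, x ∈ K ↔ ((2 * m : ℕ) : ZMod n) * x = 0 := by
    intro x
    rw [hK, AddMonoidHom.mem_ker]
    simp only [AddMonoidHom.sub_apply, AddMonoidHom.coe_mulLeft, AddMonoidHom.id_apply]
    push_cast
    constructor
    · intro h; linear_combination h
    · intro h; linear_combination h
  -- K = zmultiples of c
  have hKz : K = AddSubgroup.zmultiples ((c : ℕ) : ZMod n) := by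
    apply le_antisymm
    · intro x hx
      rw [hmemK] at hx
      have hv : x = ((x.val : ℕ) : ZMod n) := (ZMod.natCast_rightInverse x).symm
      have hdv : n ∣ 2 * m * x.val := by
        apply (ZMod.natCast_eq_zero_iff _ _).mp
        push_cast
        rw [← hv]
        exact_mod_cast hx
      -- c ∣ x.val
      have hcdvd : c ∣ x.val := by
        set a : ℕ := 2 * m / g with ha
        have hga : g * a = 2 * m := Nat.mul_div_cancel' (hgcd ▸ Nat.gcd_dvd_left _ _)
        have hcop : Nat.Coprime a c := by
          rw [ha, hc, hgcd]
          exact Nat.coprime_div_gcd_div_gcd (hgcd ▸ hgpos)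
        have : g * c ∣ g * (a * x.val) := by
          rw [hgc, ← mul_assoc, hga]; exact hdv
        have h2 : c ∣ a * x.val := (mul_dvd_mul_iff_left hgpos.ne').mp this
        exact (Nat.Coprime.dvd_of_dvd_mul_left (Nat.Coprime.symm hcop) h2)
      obtain ⟨t, ht⟩ := hcdvd
      refine ⟨(t : ℤ), ?_⟩
      show (t : ℤ) • ((c : ℕ) : ZMod n) = x
      rw [hv, ht, zsmul_eq_mul]
      push_cast
      ring
    · rw [AddSubgroup.zmultiples_le, hmemK]
      have : ((2 * m * c : ℕ) : ZMod n) = 0 := by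
        apply (ZMod.natCast_eq_zero_iff _ _).mpr
        have hga : g * (2 * m / g) = 2 * m := Nat.mul_div_cancel' (hgcd ▸ Nat.gcd_dvd_left _ _)
        refine ⟨2 * m / g, ?_⟩
        rw [← hgc]
        calc 2 * m * c = g * (2 * m / g) * c := by rw [hga]
          _ = g * c * (2 * m / g) := by ring
      push_cast at this ⊢
      exact this
  -- card
  have hcard : Nat.card K = g := by
    rw [hKz, Nat.card_zmultiples, ZMod.addOrderOf_coe c hn.ne',
      Nat.gcd_eq_right ⟨g, by rw [← hgc]; ring⟩]
    rw [← hgc, Nat.mul_div_cancel _ hcpos]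
  haveI : IsAddCyclic K := by rw [hKz]; infer_instance
  exact ⟨addEquivOfAddCyclicCardEq (by rw [hcard, Nat.card_zmod])⟩
end

section
/- Let G be a cyclic group of odd order d acting on M = ℤ/nℤ with a generator acting by multiplication by (1+2m), where n = d·m, m = d·e, and gcd(d,2)=1. Then H^p(G,M) ≅ ℤ/gcd(d,2) = 0 for all p > 0, and H^0(G,M) ≅ ℤ/(m·gcd(d,2)) = ℤ/m. -/
/-- Let G be a cyclic group of odd order d acting on M = ℤ/nℤ with a generator acting by
multiplication by (1+2m), where n = d·m, m = d·e. Computing group cohomology by the standard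
periodic resolution for a cyclic group (T = 1 - σ, i.e. multiplication by -2m, and N = norm map,
i.e. multiplication by ∑_{i<d}(1+2im)), we have H^0(G,M) ≅ ℤ/m (the invariants ker T), and
H^p(G,M) = 0 for p > 0 (the Tate quotients ker T / im N and ker N / im T vanish). -/
theorem stmt_9 (n d e m : ℕ) (hd : 0 < d) (he : 0 < e) (hm : 0 < m)
    (hnm : n = d * m) (hme : m = d * e) (hodd : Odd d)
    (T N : ZMod n →+ ZMod n)
    (hT : T = AddMonoidHom.mulLeft (-(2 : ZMod n) * (m : ZMod n)))
    (hN : N = AddMonoidHom.mulLeft (((∑ i ∈ Finset.range d, (1 + (i : ℤ) * 2 * m)) : ℤ) : ZMod n)) :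
    Nonempty (T.ker ≃+ ZMod m) ∧
    Subsingleton (T.ker ⧸ N.range.addSubgroupOf T.ker) ∧
    Subsingleton (N.ker ⧸ T.range.addSubgroupOf N.ker) := by
  have hnz : (n:ℤ) = (d:ℤ) * (m:ℤ) := by exact_mod_cast congrArg (Nat.cast : ℕ → ℤ) hnm
  have hmz : (m:ℤ) = (d:ℤ) * (e:ℤ) := by exact_mod_cast congrArg (Nat.cast : ℕ → ℤ) hme
  have hdz : (0:ℤ) < (d:ℤ) := by exact_mod_cast hd
  have hmz0 : (m:ℤ) ≠ 0 := by exact_mod_cast hm.ne'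
  have hdz0 : (d:ℤ) ≠ 0 := hdz.ne'
  set u : ℤ := 1 + (m:ℤ) * ((d:ℤ) - 1) with hu
  set c : ℤ := ∑ i ∈ Finset.range d, (1 + (i:ℤ) * 2 * m) with hcdef
  -- compute c = d * u
  have hsum2 : (∑ i ∈ Finset.range d, (i:ℤ)) * 2 = (d:ℤ) * ((d:ℤ) - 1) := by
    have h := Finset.sum_range_id_mul_two d
    have h2 : (((∑ i ∈ Finset.range d, i) * 2 : ℕ) : ℤ) = ((d * (d-1) : ℕ) : ℤ) := by
      exact_mod_cast congrArg (Nat.cast : ℕ → ℤ) h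
    push_cast [Nat.cast_sub hd] at h2
    simpa using h2
  have hc : c = (d:ℤ) * u := by
    rw [hcdef, hu]
    rw [Finset.sum_add_distrib, Finset.sum_const, Finset.card_range]
    have : ∑ i ∈ Finset.range d, (i:ℤ) * 2 * (m:ℤ)
        = (∑ i ∈ Finset.range d, (i:ℤ)) * 2 * (m:ℤ) := by
      rw [Finset.sum_mul, Finset.sum_mul]
    rw [this]
    linear_combination (m:ℤ) * hsum2
  -- coprimality of u with n
  have hud : IsCoprime u (d:ℤ) := ⟨1, -((e:ℤ) * ((d:ℤ)-1)), by rw [hu, hmz]; ring⟩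
  have hum : IsCoprime u (m:ℤ) := ⟨1, -(((d:ℤ)-1)), by rw [hu]; ring⟩
  have hun : IsCoprime u (n:ℤ) := by rw [hnz]; exact hud.mul_right hum
  obtain ⟨a, b, hab⟩ := hun
  have hunn : IsCoprime (n:ℤ) u := ⟨b, a, by linarith [hab]⟩
  obtain ⟨k, hk⟩ := hodd
  have hkz : (d:ℤ) = 2*(k:ℤ)+1 := by exact_mod_cast congrArg (Nat.cast : ℕ → ℤ) hk
  have hd2 : IsCoprime ((d:ℤ)) 2 := ⟨1, -(k:ℤ), by rw [hkz]; ring⟩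
  -- descriptions of T and N
  have hTx : ∀ z : ℤ, T ((z : ZMod n)) = (((-2) * (m:ℤ) * z : ℤ) : ZMod n) := by
    intro z; rw [hT]; show (-(2 : ZMod n) * (m : ZMod n)) * (z : ZMod n) = _; push_cast; ring
  have hNx : ∀ z : ℤ, N ((z : ZMod n)) = ((c * z : ℤ) : ZMod n) := by
    intro z; rw [hN]; show ((c : ZMod n)) * (z : ZMod n) = _; push_cast; ring
  -- the four characterizations
  have hkerT : ∀ x : ZMod n, T x = 0 ↔ ∃ z : ℤ, (((d:ℤ) * z : ℤ) : ZMod n) = x := by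
    intro x
    obtain ⟨z0, rfl⟩ := ZMod.intCast_surjective (n := n) x
    constructor
    · intro h
      rw [hTx z0, ZMod.intCast_zmod_eq_zero_iff_dvd] at h
      have h1 : (n:ℤ) ∣ 2 * (m:ℤ) * z0 := by
        have := (dvd_neg).2 h; simpa [neg_mul] using this
      rw [hnz] at h1
      have h2 : (d:ℤ) ∣ 2 * z0 := by
        have h1' : (d:ℤ) * (m:ℤ) ∣ (2 * z0) * (m:ℤ) := by
          have : 2 * (m:ℤ) * z0 = (2 * z0) * (m:ℤ) := by ring
          rwa [this] at h1
        exact (mul_dvd_mul_iff_right hmz0).1 h1'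
      have h3 : (d:ℤ) ∣ z0 := hd2.dvd_of_dvd_mul_left h2
      obtain ⟨w, rfl⟩ := h3
      exact ⟨w, rfl⟩
    · rintro ⟨z, hz⟩
      rw [← hz, hTx]
      rw [ZMod.intCast_zmod_eq_zero_iff_dvd]
      exact ⟨-2 * z, by rw [hnz]; ring⟩
  have hrangeN : ∀ x : ZMod n, (∃ y, N y = x) ↔ ∃ z : ℤ, (((d:ℤ) * z : ℤ) : ZMod n) = x := by
    intro x
    constructor
    · rintro ⟨y, rfl⟩
      obtain ⟨y0, rfl⟩ := ZMod.intCast_surjective (n := n) y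
      refine ⟨u * y0, ?_⟩
      rw [hNx, hc]; ring_nf
    · rintro ⟨z, rfl⟩
      refine ⟨((a * z : ℤ) : ZMod n), ?_⟩
      rw [hNx, ZMod.intCast_eq_intCast_iff, Int.modEq_iff_dvd]
      exact ⟨(d:ℤ) * z * b, by rw [hc]; linear_combination (-((d:ℤ) * z)) * hab⟩
  have hkerN : ∀ x : ZMod n, N x = 0 ↔ ∃ z : ℤ, (((m:ℤ) * z : ℤ) : ZMod n) = x := by
    intro x
    obtain ⟨z0, rfl⟩ := ZMod.intCast_surjective (n := n) x
    constructor
    · intro h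
      rw [hNx, ZMod.intCast_zmod_eq_zero_iff_dvd, hc] at h
      have h1 : (n:ℤ) ∣ (d:ℤ) * z0 := by
        refine hunn.dvd_of_dvd_mul_right ?_
        have : (d:ℤ) * u * z0 = (d:ℤ) * z0 * u := by ring
        rwa [this] at h
      rw [hnz] at h1
      have h2 : (m:ℤ) ∣ z0 := (mul_dvd_mul_iff_left hdz0).1 h1
      obtain ⟨w, rfl⟩ := h2
      exact ⟨w, rfl⟩
    · rintro ⟨z, hz⟩
      rw [← hz, hNx, ZMod.intCast_zmod_eq_zero_iff_dvd, hc]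
      exact ⟨u * z, by rw [hnz]; ring⟩
  have hrangeT : ∀ x : ZMod n, (∃ y, T y = x) ↔ ∃ z : ℤ, (((m:ℤ) * z : ℤ) : ZMod n) = x := by
    intro x
    constructor
    · rintro ⟨y, rfl⟩
      obtain ⟨y0, rfl⟩ := ZMod.intCast_surjective (n := n) y
      refine ⟨-2 * y0, ?_⟩
      rw [hTx]; ring_nf
    · rintro ⟨z, rfl⟩
      refine ⟨(((k:ℤ) * z : ℤ) : ZMod n), ?_⟩
      rw [hTx, ZMod.intCast_eq_intCast_iff, Int.modEq_iff_dvd]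
      exact ⟨z, by rw [hnz]; linear_combination (-((m:ℤ) * z)) * hkz⟩
  have hker_eq : T.ker = N.range := by
    ext x
    rw [AddMonoidHom.mem_ker, AddMonoidHom.mem_range, hkerT x]
    exact (hrangeN x).symm
  have hkerN_eq : N.ker = T.range := by
    ext x
    rw [AddMonoidHom.mem_ker, AddMonoidHom.mem_range, hkerN x]
    exact (hrangeT x).symm
  -- the equivalence T.ker ≃+ ZMod m
  have hsmul : (zmultiplesHom (ZMod n) (((d:ℕ) : ZMod n))) ((m:ℕ) : ℤ) = 0 := by
    simp only [zmultiplesHom_apply, zsmul_eq_mul, Int.cast_natCast]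
    rw [← Nat.cast_mul, mul_comm m d, ← hnm, ZMod.natCast_self]
  let f : ZMod m →+ ZMod n := ZMod.lift m ⟨zmultiplesHom (ZMod n) (((d:ℕ) : ZMod n)), hsmul⟩
  have hf : ∀ z : ℤ, f ((z : ZMod m)) = (((d:ℤ) * z : ℤ) : ZMod n) := by
    intro z
    show ZMod.lift m _ _ = _
    rw [ZMod.lift_coe]
    simp only [zmultiplesHom_apply, zsmul_eq_mul]
    push_cast; ring
  have hinj : Function.Injective f := by
    rw [injective_iff_map_eq_zero]
    intro x hx
    obtain ⟨z, rfl⟩ := ZMod.intCast_surjective (n := m) x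
    rw [hf, ZMod.intCast_zmod_eq_zero_iff_dvd, hnz] at hx
    have h2 : (m:ℤ) ∣ z := (mul_dvd_mul_iff_left hdz0).1 hx
    rwa [ZMod.intCast_zmod_eq_zero_iff_dvd]
  have hrange_eq : f.range = T.ker := by
    ext x
    rw [AddMonoidHom.mem_range, AddMonoidHom.mem_ker, hkerT x]
    constructor
    · rintro ⟨w, rfl⟩
      obtain ⟨z, rfl⟩ := ZMod.intCast_surjective (n := m) w
      exact ⟨z, (hf z).symm⟩
    · rintro ⟨z, hz⟩
      exact ⟨((z : ZMod m)), by rw [hf z, hz]⟩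
  refine ⟨⟨((AddMonoidHom.ofInjective hinj).trans (AddEquiv.addSubgroupCongr hrange_eq)).symm⟩, ?_, ?_⟩
  · have h1 : N.range.addSubgroupOf T.ker = ⊤ := by
      rw [hker_eq, AddSubgroup.addSubgroupOf_self]
    rw [h1]
    exact QuotientAddGroup.subsingleton_quotient_top
  · have h1 : T.range.addSubgroupOf N.ker = ⊤ := by
      rw [hkerN_eq, AddSubgroup.addSubgroupOf_self]
    rw [h1]
    exact QuotientAddGroup.subsingleton_quotient_top
end

section
/- Let G be a finite cyclic group of order d with generator σ, and M a ℤ[G]-module which as an abelian group is ℤ/n with n = d·m, m = d·e, on which σ acts as multiplication by 1+km for a fixed integer k. If d is even, k is odd, and 4 ∤ m, then the norm map N = ∑_{i=0}^{d-1} σ^i acts on M as multiplication by d - m·d/2, and its kernel is (m/2)·ℤ/n, of order 2d. -/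
/-- Let G be a finite cyclic group of order d with generator σ, and M = ℤ/n with n = d·m, m = d·e,
on which σ acts as multiplication by 1+km for a fixed integer k. If d is even, k is odd, and
4 ∤ m, then the norm map N = ∑_{i=0}^{d-1} σ^i acts on M as multiplication by d - m·d/2, and its
kernel is (m/2)·ℤ/n, of order 2d. -/
theorem stmt_14 (n d e m : ℕ) (hd : 0 < d) (he : 0 < e) (hm : 0 < m)
    (hnm : n = d * m) (hme : m = d * e) (hdev : Even d) (k : ℤ) (hk : Odd k)
    (h4 : ¬ (4 ∣ m))
    (N : ZMod n →+ ZMod n)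
    (hN : N = AddMonoidHom.mulLeft (((∑ i ∈ Finset.range d, (1 + (i : ℤ) * k * m)) : ℤ) : ZMod n)) :
    N = AddMonoidHom.mulLeft ((((d : ℤ) - m * (d / 2 : ℕ)) : ℤ) : ZMod n) ∧
    N.ker = AddSubgroup.zmultiples (((m / 2 : ℕ) : ZMod n)) ∧
    Nat.card N.ker = 2 * d := by
  obtain ⟨d₂, hd2⟩ := hdev
  have hd2' : d = 2 * d₂ := by omega
  have hd₂ : 0 < d₂ := by omega
  obtain ⟨m', hmm⟩ : ∃ m', m = 2 * m' := ⟨d₂ * e, by rw [hme, hd2']; ring⟩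
  have hm' : 0 < m' := by omega
  obtain ⟨t, ht⟩ : ∃ t, m' = 2 * t + 1 := by
    have h2 : ¬ (2 ∣ m') := fun ⟨u, hu⟩ => h4 ⟨u, by omega⟩
    exact ⟨m' / 2, by omega⟩
  obtain ⟨k', hk'⟩ := hk
  have hn4 : n = 4 * d₂ * m' := by rw [hnm, hd2', hmm]; ring
  have hnpos : 0 < n := by rw [hn4]; exact Nat.mul_pos (by omega) hm'
  haveI : NeZero n := ⟨hnpos.ne'⟩
  have hdhalf : d / 2 = d₂ := by omega
  have hmhalf : m / 2 = m' := by omega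
  -- casts
  have hdZ : (d : ℤ) = 2 * d₂ := by exact_mod_cast hd2'
  have hmZ : (m : ℤ) = 2 * m' := by exact_mod_cast hmm
  have hm'Z : (m' : ℤ) = 2 * t + 1 := by exact_mod_cast ht
  have hnZ : (n : ℤ) = 4 * d₂ * m' := by exact_mod_cast hn4
  -- Gauss sum
  have hgaussNat : (∑ i ∈ Finset.range d, i) = d₂ * (2 * d₂ - 1) := by
    have h := Finset.sum_range_id_mul_two d
    have h2 : d * (d - 1) = (d₂ * (2 * d₂ - 1)) * 2 := by
      rw [hd2']
      have h3 : 2 * d₂ - 1 = 2 * d₂ - 1 := rfl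
      generalize 2 * d₂ - 1 = a
      ring
    exact Nat.eq_of_mul_eq_mul_right (by norm_num) (h.trans h2)
  have hgauss : (∑ i ∈ Finset.range d, (i : ℤ)) = (d₂ : ℤ) * (2 * d₂ - 1) := by
    rw [← Nat.cast_sum, hgaussNat]
    push_cast [Nat.cast_sub (show 1 ≤ 2 * d₂ by omega)]
    ring
  have hSum : (∑ i ∈ Finset.range d, (1 + (i : ℤ) * k * m))
      = d + (∑ i ∈ Finset.range d, (i : ℤ)) * k * m := by
    rw [Finset.sum_add_distrib, Finset.sum_const, Finset.card_range,
      Finset.sum_mul, Finset.sum_mul, nsmul_eq_mul, mul_one]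
  have hdvd : (n : ℤ) ∣ (∑ i ∈ Finset.range d, (1 + (i : ℤ) * k * m))
      - ((d : ℤ) - m * (d / 2 : ℕ)) := by
    rw [hSum, hgauss, hdhalf, hk']
    refine ⟨2 * k' * d₂ - k' + d₂, ?_⟩
    rw [hnZ, hdZ, hmZ]
    ring
  have hcast : ((∑ i ∈ Finset.range d, (1 + (i : ℤ) * k * m) : ℤ) : ZMod n)
      = ((((d : ℤ) - m * (d / 2 : ℕ)) : ℤ) : ZMod n) :=
    (ZMod.intCast_eq_intCast_iff _ _ _).mpr ((Int.modEq_iff_dvd.mpr hdvd).symm)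
  have part1 : N = AddMonoidHom.mulLeft ((((d : ℤ) - m * (d / 2 : ℕ)) : ℤ) : ZMod n) := by
    rw [hN, hcast]
  -- coprimality
  have hcop : Nat.Coprime m' t := by
    rw [ht]
    simpa [Nat.coprime_comm] using (Nat.coprime_succ_self (2 * t)).coprime_dvd_left
      ⟨2, by ring⟩
  have hker : N.ker = AddSubgroup.zmultiples (((m / 2 : ℕ) : ZMod n)) := by
    rw [hmhalf]
    ext x
    rw [AddMonoidHom.mem_ker, part1]
    simp only [AddMonoidHom.coe_mulLeft]
    rw [AddSubgroup.mem_zmultiples_iff]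
    constructor
    · intro hx
      have hxv : ((x.val : ℕ) : ZMod n) = x := ZMod.natCast_rightInverse x
      have hx' : ((((d : ℤ) - m * (d / 2 : ℕ)) * (x.val : ℤ) : ℤ) : ZMod n) = 0 := by
        rw [Int.cast_mul, Int.cast_natCast, hxv]; exact hx
      have hdvd2 : (n : ℤ) ∣ ((d : ℤ) - m * (d / 2 : ℕ)) * (x.val : ℤ) :=
        (ZMod.intCast_zmod_eq_zero_iff_dvd _ _).mp hx'
      have hdvd3 : (4 * (d₂ : ℤ)) * m' ∣ (4 * (d₂ : ℤ)) * ((t * x.val : ℕ) : ℤ) := by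
        have h5 : ((d : ℤ) - m * (d / 2 : ℕ)) = -(4 * (d₂ : ℤ) * t) := by
          rw [hdhalf, hdZ, hmZ, hm'Z]; ring
        have heq : ((d : ℤ) - m * (d / 2 : ℕ)) * (x.val : ℤ)
            = -((4 * (d₂ : ℤ)) * ((t * x.val : ℕ) : ℤ)) := by
          rw [h5]; push_cast; ring
        rw [heq, dvd_neg] at hdvd2
        calc (4 * (d₂ : ℤ)) * m' = (n : ℤ) := by rw [hnZ]
        _ ∣ _ := hdvd2
      have hdvd4 : (m' : ℤ) ∣ ((t * x.val : ℕ) : ℤ) :=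
        (mul_dvd_mul_iff_left (by positivity : (4 * (d₂ : ℤ)) ≠ 0)).mp hdvd3
      have hdvd5 : m' ∣ t * x.val := Int.natCast_dvd_natCast.mp hdvd4
      obtain ⟨w, hw⟩ := (Nat.Coprime.dvd_of_dvd_mul_left hcop hdvd5 : m' ∣ x.val)
      refine ⟨(w : ℤ), ?_⟩
      rw [zsmul_eq_mul, ← hxv, hw]
      push_cast
      ring
    · rintro ⟨w, rfl⟩
      rw [zsmul_eq_mul]
      have h0 : ((((d : ℤ) - m * (d / 2 : ℕ) : ℤ)) : ZMod n) * ((m' : ℕ) : ZMod n) = 0 := by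
        have h5 : ((d : ℤ) - m * (d / 2 : ℕ)) = -(4 * (d₂ : ℤ) * t) := by
          rw [hdhalf, hdZ, hmZ, hm'Z]; ring
        have h1 : ((((d : ℤ) - m * (d / 2 : ℕ)) * (m' : ℤ) : ℤ) : ZMod n) = 0 := by
          apply (ZMod.intCast_zmod_eq_zero_iff_dvd _ _).mpr
          refine ⟨-t, ?_⟩
          rw [h5, hnZ, hm'Z]
          ring
        rw [Int.cast_mul, Int.cast_natCast] at h1
        exact h1
      rw [mul_left_comm, h0, mul_zero]
  refine ⟨part1, hker, ?_⟩
  rw [hker, Nat.card_zmultiples, hmhalf,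
    ZMod.addOrderOf_coe m' (by omega : n ≠ 0)]
  have hgcd : Nat.gcd n m' = m' := Nat.gcd_eq_right ⟨4 * d₂, by rw [hn4]; ring⟩
  rw [hgcd, hn4]
  rw [Nat.mul_div_cancel _ hm']
  omega
end
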